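/- arXiv:2307.16501 — 2 statements merged into one kernel-verified Lean document; each statement's English description precedes it below -/
import Mathlib

section
/- Let S be a simplicial affine semigroup in ℕ^3 minimally generated by A ⊃ E = {a_1,a_2,a_3}, with toric ideal I_A. Suppose S is not Cohen-Macaulay-like in the sense that both x_j and x_k are zero-divisors on k[x]/(I_A + ⟨x_i⟩), where {i,j,k} = {1,2,3}, and suppose Ap(S, a_i) has no ⪯_S-maximal element. Then x_j - x_k is a nonzero-divisor on k[x]/(I_A + ⟨x_i⟩). -/
open MvPolynomial

noncomputable section

/-- The toric ideal of the family `a : Fin e → ℕ^d`. -/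
def toricIdeal (k : Type*) [Field k] {e d : ℕ} (a : Fin e → (Fin d → ℕ)) :
    Ideal (MvPolynomial (Fin e) k) :=
  RingHom.ker (MvPolynomial.aeval
    (fun i => AddMonoidAlgebra.single (a i) (1 : k)) :
      MvPolynomial (Fin e) k →ₐ[k] AddMonoidAlgebra k (Fin d → ℕ)).toRingHom

/-- Membership in `Ap(S, x)`. -/
def memApery {d : ℕ} (S : AddSubmonoid (Fin d → ℕ)) (x b : Fin d → ℕ) : Prop :=
  b ∈ S ∧ ¬ ∃ s ∈ S, b = x + s

/-- The semigroup order `u ⪯_S v`. -/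
def semigroupLE {d : ℕ} (S : AddSubmonoid (Fin d → ℕ)) (u v : Fin d → ℕ) : Prop :=
  ∃ s ∈ S, v = u + s

/-!
Modulo the toric ideal, `g ∈ I_A + ⟨x_i⟩` says that the image of `g` in `k[S]` is divisible by
`t^{a_i}`, i.e. that all its exponents lie in `a_i + S`. So let `f ∈ k[S]` with
`(t^{a_j} - t^{a_k}) f ∈ (t^{a_i})` but `f ∉ (t^{a_i})`, and fix an additive `λ : S → ℕ`, positive
away from `0`, with `λ(a_k) < λ(a_j)`.

If `t^s f ∉ (t^{a_i})`, the `λ`-largest exponent `b` of `f` with `s + b ∈ Ap(S, a_i)` has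
`s + b + a_j ∉ Ap(S, a_i)`: otherwise the term `t^{s + a_j + b}` of `t^{s + a_j} f` would have to
cancel against a term `t^{s + a_k + x}` with `λ(x) > λ(b)` and `s + x ∈ Ap(S, a_i)`.
If `t^s f ∉ (t^{a_i})` always forces `t^{s + a_j} f ∉ (t^{a_i})`, this applies to all `s = n a_j`,
and the exponents `b` so obtained are pairwise distinct, which the finite support of `f` forbids.
Otherwise some `t^s f ∉ (t^{a_i})` is killed modulo `t^{a_i}` by `t^{a_j}`, hence by
`t^{a_k} = t^{a_j} - (t^{a_j} - t^{a_k})` and by `t^{a_i}`. For an exponent `w` of it in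
`Ap(S, a_i)`, every `r` with `w + r ∈ Ap(S, a_i)` then lies in the finite set `Ap(S, E)`, and the
`λ`-largest such `w + r` is `⪯_S`-maximal in `Ap(S, a_i)`.
-/

open AddMonoidAlgebra

section Apery

variable {G : Type*} [AddCommMonoid G]

theorem exists_maximal_apery_of_forall_add_mem {E : Set G}
    (hfin : {g | ∀ t ∈ E, ¬∃ d, g = t + d}.Finite) (lam : G →+ ℕ) (hlam : ∀ g, lam g = 0 → g = 0)
    {a b : G} (hb : ¬∃ d, b = a + d) (hbE : ∀ t ∈ E, ∃ d, b + t = a + d) :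
    ∃ m, (¬∃ d, m = a + d) ∧ ∀ r, (¬∃ d, m + r = a + d) → r = 0 := by
  set T := {r | ¬∃ d, b + r = a + d}
  have hT : T ⊆ {g | ∀ t ∈ E, ¬∃ d, g = t + d} := by
    rintro r hr t ht ⟨d, rfl⟩
    obtain ⟨d', hd'⟩ := hbE t ht
    exact hr ⟨d' + d, by rw [← add_assoc, hd', add_assoc]⟩
  obtain ⟨m, hmT, hmax⟩ := (hfin.subset hT).exists_maximalFor lam T ⟨0, by simpa [T] using hb⟩
  refine ⟨b + m, hmT, fun r hr => hlam r ?_⟩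
  have := hmax (j := m + r) (by simpa [T, add_assoc] using hr) (by simp)
  simp only [map_add] at this
  omega

theorem not_forall_exists_apery_exit (B : Finset G) (a g : G) :
    ¬∀ n : ℕ, ∃ b ∈ B, (¬∃ d, n • g + b = a + d) ∧ ∃ d, n • g + b + g = a + d := by
  intro h
  choose b hbB hout hin using h
  obtain ⟨m, n, hmn, hb⟩ := Finite.exists_ne_map_eq_of_infinite fun n => (⟨b n, hbB n⟩ : B)
  wlog hlt : m < n generalizing m n
  · exact this n m hmn.symm hb.symm (by omega)
  obtain ⟨c, rfl⟩ := Nat.exists_eq_add_of_lt hlt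
  obtain ⟨d, hd⟩ := hin m
  refine hout (m + c + 1) ⟨d + c • g, ?_⟩
  rw [← show b m = b (m + c + 1) from congrArg Subtype.val hb, ← add_assoc, ← hd, add_nsmul,
    add_nsmul, one_nsmul]
  abel

section Semiring

variable {k : Type*} [CommSemiring k]

theorem of'_add (a b : G) : of' k G (a + b) = of' k G a * of' k G b := by
  simp [of'_apply, single_mul_single]

theorem of'_dvd_iff_forall_mem_support {g : G} {x : AddMonoidAlgebra k G} :
    of' k G g ∣ x ↔ ∀ w ∈ x.coeff.support, ∃ d, w = g + d := by
  rw [← Ideal.mem_span_singleton, ← Set.image_singleton, mem_ideal_span_of'_image]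
  simp [add_comm]

theorem of'_dvd_of'_mul_iff [IsCancelAdd G] {g s : G} {x : AddMonoidAlgebra k G} :
    of' k G g ∣ of' k G s * x ↔ ∀ b ∈ x.coeff.support, ∃ d, s + b = g + d := by
  rw [of'_dvd_iff_forall_mem_support, of'_apply, support_coeff_single_mul _ _ (by simp)]
  simp

end Semiring

variable {k : Type*} [CommRing k] [IsCancelAdd G]

theorem exists_add_eq_of_of'_dvd_sub_mul {a u v b : G} {f : AddMonoidAlgebra k G}
    (h : of' k G a ∣ (of' k G u - of' k G v) * f) (hb : b ∈ f.coeff.support)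
    (hub : ¬∃ d, u + b = a + d) : ∃ x ∈ f.coeff.support, v + x = u + b := by
  have h0 : ((of' k G u - of' k G v) * f).coeff (u + b) = 0 := by
    by_contra hne
    exact hub (of'_dvd_iff_forall_mem_support.1 h _ (Finsupp.mem_support_iff.2 hne))
  have hv : (of' k G v * f).coeff (u + b) ≠ 0 := by
    rw [sub_mul, AddMonoidAlgebra.coeff_sub, Finsupp.sub_apply, of'_apply, coeff_single_mul_add,
      one_mul, sub_eq_zero] at h0
    rw [← h0]
    exact Finsupp.mem_support_iff.1 hb
  rw [← Finsupp.mem_support_iff, of'_apply, support_coeff_single_mul _ _ (by simp)] at hv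
  simpa using hv

theorem exists_apery_exit_of_not_of'_dvd {lam : G →+ ℕ} {ai aj ak s : G} {f : AddMonoidAlgebra k G}
    (hjk : lam ak < lam aj) (h : of' k G ai ∣ (of' k G aj - of' k G ak) * f)
    (hs : ¬of' k G ai ∣ of' k G s * f) :
    ∃ b ∈ f.coeff.support, (¬∃ d, s + b = ai + d) ∧ ∃ d, s + b + aj = ai + d := by
  classical
  have hs' : of' k G ai ∣ (of' k G (s + aj) - of' k G (s + ak)) * f := by
    have : (of' k G (s + aj) - of' k G (s + ak)) * f =
        of' k G s * ((of' k G aj - of' k G ak) * f) := by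
      rw [of'_add, of'_add]
      ring
    exact this ▸ h.mul_left _
  set B := f.coeff.support.filter fun b => ¬∃ d, s + b = ai + d
  have hB : B.Nonempty := by
    rw [of'_dvd_of'_mul_iff] at hs
    push Not at hs
    obtain ⟨b, hb, hb'⟩ := hs
    exact ⟨b, Finset.mem_filter.2 ⟨hb, by simpa using hb'⟩⟩
  obtain ⟨b, hbB, hbmax⟩ := B.exists_max_image lam hB
  rw [Finset.mem_filter] at hbB
  refine ⟨b, hbB.1, hbB.2, ?_⟩
  by_contra hout
  obtain ⟨x, hx, hxb⟩ := exists_add_eq_of_of'_dvd_sub_mul hs' hbB.1 (by rwa [add_right_comm])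
  have hxB : x ∈ B := by
    refine Finset.mem_filter.2 ⟨hx, ?_⟩
    rintro ⟨d, hd⟩
    exact hout ⟨d + ak, by rw [add_right_comm, ← hxb, add_right_comm, hd, add_assoc]⟩
  have hlx := hbmax x hxB
  have hl := congrArg lam hxb
  simp only [map_add] at hl
  omega

theorem of'_dvd_of_of'_dvd_sub_mul {ai aj ak : G}
    (hfin : {g | ∀ t ∈ ({ai, aj, ak} : Set G), ¬∃ d, g = t + d}.Finite)
    (lam : G →+ ℕ) (hlam : ∀ g, lam g = 0 → g = 0) (hjk : lam aj ≠ lam ak)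
    (hmax : ∀ m, (¬∃ d, m = ai + d) → ∃ r ≠ 0, ¬∃ d, m + r = ai + d)
    {f : AddMonoidAlgebra k G} (h : of' k G ai ∣ (of' k G aj - of' k G ak) * f) :
    of' k G ai ∣ f := by
  wlog hlt : lam ak < lam aj generalizing aj ak
  · refine this (by rwa [Set.pair_comm]) hjk.symm ?_ (by omega)
    rwa [← dvd_neg, ← neg_mul, neg_sub]
  by_contra hf
  by_cases hstep : ∀ s, ¬of' k G ai ∣ of' k G s * f → ¬of' k G ai ∣ of' k G (s + aj) * f
  · have hn : ∀ n : ℕ, ¬of' k G ai ∣ of' k G (n • aj) * f := by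
      intro n
      induction n with
      | zero => simpa [of'_apply, ← AddMonoidAlgebra.one_def] using hf
      | succ n ih => rw [succ_nsmul]; exact hstep _ ih
    exact not_forall_exists_apery_exit f.coeff.support ai aj fun n =>
      exists_apery_exit_of_not_of'_dvd hlt h (hn n)
  push Not at hstep
  obtain ⟨s, hs, hsj⟩ := hstep
  have hst : ∀ t ∈ ({ai, aj, ak} : Set G), of' k G ai ∣ of' k G (s + t) * f := by
    rintro t (rfl | rfl | rfl)
    · exact ⟨of' k G s * f, by rw [of'_add]; ring⟩
    · exact hsj
    · have : of' k G (s + t) * f =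
          of' k G (s + aj) * f - of' k G s * ((of' k G aj - of' k G t) * f) := by
        rw [of'_add, of'_add]; ring
      exact this ▸ dvd_sub hsj (h.mul_left _)
  rw [of'_dvd_of'_mul_iff] at hs
  push Not at hs
  obtain ⟨b, hb, hsb⟩ := hs
  obtain ⟨m, hm, hmmax⟩ := exists_maximal_apery_of_forall_add_mem hfin lam hlam (b := s + b)
    (by simpa using hsb) fun t ht => by
      rw [add_right_comm]; exact of'_dvd_of'_mul_iff.1 (hst t ht) b hb
  obtain ⟨r, hr0, hr⟩ := hmax m hm
  exact hr0 (hmmax r hr)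

end Apery

section Toric

variable {ι M : Type*} [AddCommMonoid M] (a : ι → M)

def toClosureRange (l : ι) : AddSubmonoid.closure (Set.range a) :=
  ⟨a l, AddSubmonoid.subset_closure (Set.mem_range_self l)⟩

theorem closure_range_toClosureRange :
    AddSubmonoid.closure (Set.range (toClosureRange a)) = ⊤ := by
  convert AddSubmonoid.closure_closure_coe_preimage (s := Set.range a)
  ext x
  constructor
  · rintro ⟨l, rfl⟩
    exact ⟨l, rfl⟩
  · rintro ⟨l, hl⟩
    exact ⟨l, Subtype.ext hl⟩

variable (k : Type*) [CommSemiring k]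

def toricPresentation :
    MvPolynomial ι k →ₐ[k] AddMonoidAlgebra k (AddSubmonoid.closure (Set.range a)) :=
  aeval fun l => of' k _ (toClosureRange a l)

@[simp]
theorem toricPresentation_X (l : ι) : toricPresentation a k (X l) = of' k _ (toClosureRange a l) :=
  aeval_X _ l

theorem toricPresentation_surjective : Function.Surjective (toricPresentation a k) := by
  have hcomp : (aeval fun s : Set.range (toClosureRange a) =>
      of' k _ (s : AddSubmonoid.closure (Set.range a))) =
      (toricPresentation a k).comp (rename (Set.rangeSplitting (toClosureRange a))) := by
    ext s
    simp [Set.apply_rangeSplitting]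
  have := mvPolynomial_aeval_of_surjective_of_closure (R := k) (closure_range_toClosureRange a)
  rw [hcomp, AlgHom.coe_comp] at this
  exact this.of_comp

end Toric

theorem toricIdeal_eq_ker (k : Type*) [Field k] {e d : ℕ} (a : Fin e → (Fin d → ℕ)) :
    toricIdeal k a = RingHom.ker (toricPresentation a k) := by
  have hcomp : (aeval fun l => single (a l) (1 : k)) =
      (mapDomainAlgHom k k (AddSubmonoid.closure (Set.range a)).subtype).comp
        (toricPresentation a k) := by
    ext l
    simp [toClosureRange]
  rw [toricIdeal, hcomp]
  exact RingHom.ker_comp_of_injective _ (mapDomain_injective Subtype.val_injective)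

theorem mem_toricIdeal_sup_span_X_iff (k : Type*) [Field k] {e d : ℕ} (a : Fin e → (Fin d → ℕ))
    (l : Fin e) (p : MvPolynomial (Fin e) k) :
    p ∈ toricIdeal k a ⊔ Ideal.span {X l} ↔
      of' k _ (toClosureRange a l) ∣ toricPresentation a k p := by
  rw [toricIdeal_eq_ker, sup_comm, RingHom.ker_eq_comap_bot,
    ← Ideal.comap_map_of_surjective _ (toricPresentation_surjective a k), Ideal.mem_comap,
    Ideal.map_span, Set.image_singleton, Ideal.mem_span_singleton, toricPresentation_X]

theorem finite_apery_closure {ι κ M : Type*} [AddCommMonoid M] (a : ι → M) (c : κ → ι)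
    (h : {x | x ∈ AddSubmonoid.closure (Set.range a) ∧
      ∀ t, ¬∃ s ∈ AddSubmonoid.closure (Set.range a), x = a (c t) + s}.Finite) :
    {g | ∀ t ∈ Set.range fun t => toClosureRange a (c t), ¬∃ d, g = t + d}.Finite := by
  refine (h.preimage Subtype.val_injective.injOn).subset fun g hg => ⟨g.2, ?_⟩
  rintro t ⟨s, hs, heq⟩
  exact hg _ ⟨t, rfl⟩ ⟨⟨s, hs⟩, Subtype.ext heq⟩

theorem forall_exists_add_apery_of_not_exists_maximal {n : ℕ} {S : AddSubmonoid (Fin n → ℕ)}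
    {x : S} (h : ¬∃ m, memApery S x m ∧ ∀ y, memApery S x y → semigroupLE S m y → y = m) :
    ∀ m : S, (¬∃ d, m = x + d) → ∃ r ≠ 0, ¬∃ d, m + r = x + d := by
  intro m hm
  by_contra! hr
  refine h ⟨m, ⟨m.2, fun ⟨s, hs, heq⟩ => hm ⟨⟨s, hs⟩, Subtype.ext heq⟩⟩, ?_⟩
  rintro y ⟨-, hy⟩ ⟨r, hrS, rfl⟩
  by_contra hne
  obtain ⟨d, hd⟩ := hr ⟨r, hrS⟩ fun hr0 => hne (by simpa using congrArg Subtype.val hr0)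
  exact hy ⟨d, d.2, congrArg Subtype.val hd⟩

theorem exists_addMonoidHom_pos_ne {ι : Type*} [Fintype ι] {u v : ι → ℕ} (huv : u ≠ v) :
    ∃ lam : (ι → ℕ) →+ ℕ, (∀ x, lam x = 0 → x = 0) ∧ lam u ≠ lam v := by
  obtain ⟨t, ht⟩ := Function.ne_iff.1 huv
  let σ : (ι → ℕ) →+ ℕ := ∑ s, Pi.evalAddMonoidHom (fun _ => ℕ) s
  have hσ : ∀ x, σ x = 0 → x = 0 := fun x hx => by
    funext s
    simp [σ, Finset.sum_eq_zero_iff] at hx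
    exact hx s
  by_cases hσuv : σ u = σ v
  · refine ⟨σ + Pi.evalAddMonoidHom (fun _ => ℕ) t, fun x hx => hσ x ?_, ?_⟩
    · simp only [AddMonoidHom.add_apply] at hx
      omega
    · simp [hσuv, ht]
  · exact ⟨σ, hσ, hσuv⟩

theorem xj_sub_xk_nonzerodivisor_general (k : Type*) [Field k] {e : ℕ} (hde : 3 ≤ e)
    (a : Fin e → (Fin 3 → ℕ))
    (hE : LinearIndependent ℚ (fun t : Fin 3 => (fun s => (a (Fin.castLE hde t) s : ℚ))))
    (S : AddSubmonoid (Fin 3 → ℕ)) (hS : S = AddSubmonoid.closure (Set.range a))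
    (hFin : {x | x ∈ S ∧ ∀ t : Fin 3, ¬ ∃ s ∈ S, x = a (Fin.castLE hde t) + s}.Finite)
    (i j kk : Fin 3) (hperm : ({i, j, kk} : Finset (Fin 3)) = Finset.univ)
    (J : Ideal (MvPolynomial (Fin e) k))
    (hJ : J = toricIdeal k a ⊔ Ideal.span {X (Fin.castLE hde i)})
    (hmax : ¬ ∃ m, memApery S (a (Fin.castLE hde i)) m ∧
      ∀ x, memApery S (a (Fin.castLE hde i)) x → semigroupLE S m x → x = m) :
    ∀ g, (X (Fin.castLE hde j) - X (Fin.castLE hde kk)) * g ∈ J → g ∈ J := by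
  subst hS hJ
  have hjk : j ≠ kk :=
    (by decide : ∀ i j kk : Fin 3, ({i, j, kk} : Finset (Fin 3)) = .univ → j ≠ kk) i j kk hperm
  obtain ⟨lam, hlam, hlam_ne⟩ := exists_addMonoidHom_pos_ne (u := a (Fin.castLE hde j))
    (v := a (Fin.castLE hde kk)) fun h => hjk (hE.injective (by simp only [h]))
  have hrange : Set.range (fun t => toClosureRange a (Fin.castLE hde t)) =
      {toClosureRange a (Fin.castLE hde i), toClosureRange a (Fin.castLE hde j),
        toClosureRange a (Fin.castLE hde kk)} := by
    rw [← Set.image_univ (f := fun t => toClosureRange a (Fin.castLE hde t)), ← Finset.coe_univ,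
      ← hperm]
    simp [Set.image_insert_eq]
  intro g hg
  rw [mem_toricIdeal_sup_span_X_iff] at hg ⊢
  rw [map_mul, map_sub, toricPresentation_X, toricPresentation_X] at hg
  exact of'_dvd_of_of'_dvd_sub_mul (hrange ▸ finite_apery_closure a _ hFin)
    (lam.comp (AddSubmonoid.closure (Set.range a)).subtype) (fun g hg => Subtype.ext (hlam _ hg))
    hlam_ne (forall_exists_add_apery_of_not_exists_maximal hmax) hg

/-- (`d = 3`) if both `x_j` and `x_k` are zero-divisors on
`k[x]/(I_A + ⟨x_i⟩)` and `Ap(S, a_i)` has no `⪯_S`-maximal element,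
then `x_j - x_k` is a nonzero-divisor on `k[x]/(I_A + ⟨x_i⟩)`. -/
theorem xj_sub_xk_nonzerodivisor (k : Type*) [Field k] {e : ℕ} (hde : 3 ≤ e)
    (a : Fin e → (Fin 3 → ℕ))
    (hE : LinearIndependent ℚ (fun t : Fin 3 => (fun s => (a (Fin.castLE hde t) s : ℚ))))
    (S : AddSubmonoid (Fin 3 → ℕ)) (hS : S = AddSubmonoid.closure (Set.range a))
    (hFin : {x | x ∈ S ∧ ∀ t : Fin 3, ¬ ∃ s ∈ S, x = a (Fin.castLE hde t) + s}.Finite)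
    (i j kk : Fin 3) (hperm : ({i, j, kk} : Finset (Fin 3)) = Finset.univ)
    (J : Ideal (MvPolynomial (Fin e) k))
    (hJ : J = toricIdeal k a ⊔ Ideal.span {X (Fin.castLE hde i)})
    (hzdj : ∃ g, g ∉ J ∧ X (Fin.castLE hde j) * g ∈ J)
    (hzdk : ∃ g, g ∉ J ∧ X (Fin.castLE hde kk) * g ∈ J)
    (hmax : ¬ ∃ m, memApery S (a (Fin.castLE hde i)) m ∧
      ∀ x, memApery S (a (Fin.castLE hde i)) x → semigroupLE S m x → x = m) :
    ∀ g, (X (Fin.castLE hde j) - X (Fin.castLE hde kk)) * g ∈ J → g ∈ J :=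
  xj_sub_xk_nonzerodivisor_general k hde a hE S hS hFin i j kk hperm J hJ hmax

end
end

section
/- Let S be a simplicial affine semigroup in ℕ^d with extremal rays E = {a_1,...,a_d} and suppose b ∈ Ap(S, a_i) satisfies b + a_j ∉ Ap(S, a_i) and b + a_k ∉ Ap(S, a_i) for distinct indices j, k ≠ i with {a_j, a_k} ⊆ E \ {a_i}, and in fact b + c ∉ Ap(S, a_i) for every c ∈ E \ {a_i}. Then b + c ∉ Ap(S, a_i) for every c ∈ S \ Ap(S, E), and consequently Ap(S, a_i) has a ⪯_S-maximal element. -/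
section

variable {d : ℕ} {S : AddSubmonoid (Fin d → ℕ)}

/-- `Ap(S, E) = ⋂ t, Ap(S, a t)`. -/
def aperyOfFamily {ι : Type*} (S : AddSubmonoid (Fin d → ℕ)) (a : ι → Fin d → ℕ) :
    Set (Fin d → ℕ) :=
  {x | x ∈ S ∧ ∀ t, ¬ ∃ s ∈ S, x = a t + s}

theorem semigroupLE.le {u v : Fin d → ℕ} (h : semigroupLE S u v) : u ≤ v := by
  obtain ⟨s, -, rfl⟩ := h
  exact le_self_add

theorem semigroupLE.trans {u v w : Fin d → ℕ} (huv : semigroupLE S u v)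
    (hvw : semigroupLE S v w) : semigroupLE S u w := by
  obtain ⟨s, hs, rfl⟩ := huv
  obtain ⟨s', hs', rfl⟩ := hvw
  exact ⟨s + s', S.add_mem hs hs', add_assoc u s s'⟩

theorem exists_eq_add_of_not_memApery {x y : Fin d → ℕ} (hy : y ∈ S)
    (h : ¬ memApery S x y) : ∃ s ∈ S, y = x + s := by
  by_contra hne
  exact h ⟨hy, hne⟩

theorem not_memApery_add_of_eq_add {x y s : Fin d → ℕ} (hs : s ∈ S)
    (h : ∃ s' ∈ S, y = x + s') : ¬ memApery S x (y + s) := by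
  rintro ⟨-, hmem⟩
  obtain ⟨s', hs', rfl⟩ := h
  exact hmem ⟨s' + s, S.add_mem hs' hs, add_assoc x s' s⟩

theorem not_memApery_add_of_not_mem_aperyOfFamily {ι : Type*} {a : ι → Fin d → ℕ}
    (ha : ∀ j, a j ∈ S) {i : ι} {b : Fin d → ℕ} (hb : b ∈ S)
    (hstep : ∀ j, j ≠ i → ¬ memApery S (a i) (b + a j)) {c : Fin d → ℕ} (hc : c ∈ S)
    (hcE : c ∉ aperyOfFamily S a) : ¬ memApery S (a i) (b + c) := by
  obtain ⟨t, s, hs, rfl⟩ : ∃ t, ∃ s ∈ S, c = a t + s := by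
    by_contra! h
    exact hcE ⟨hc, fun t ⟨s, hs, he⟩ => h t s hs he⟩
  rw [← add_assoc]
  refine not_memApery_add_of_eq_add hs ?_
  obtain rfl | hti := eq_or_ne t i
  · exact ⟨b, hb, add_comm b (a t)⟩
  · exact exists_eq_add_of_not_memApery (S.add_mem hb (ha t)) (hstep t hti)

theorem exists_maximal_memApery_of_finite {x b : Fin d → ℕ} (hb : memApery S x b)
    (hfin : {y | memApery S x y ∧ semigroupLE S b y}.Finite) :
    ∃ m, memApery S x m ∧ ∀ y, memApery S x y → semigroupLE S m y → y = m := by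
  obtain ⟨m, ⟨hm, hbm⟩, hmax⟩ :=
    hfin.exists_maximal ⟨b, hb, 0, S.zero_mem, (add_zero b).symm⟩
  refine ⟨m, hm, fun y hy hmy => ?_⟩
  exact le_antisymm (hmax ⟨hy, hbm.trans hmy⟩ hmy.le) hmy.le

end

theorem apery_maximal_of_step_general {d : ℕ} (S : AddSubmonoid (Fin d → ℕ))
    (a : Fin d → (Fin d → ℕ)) (ha : ∀ i, a i ∈ S)
    (hFin : {x | x ∈ S ∧ ∀ t, ¬ ∃ s ∈ S, x = a t + s}.Finite)
    (i : Fin d) (b : Fin d → ℕ) (hb : memApery S (a i) b)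
    (hstep : ∀ j, j ≠ i → ¬ memApery S (a i) (b + a j)) :
    (∀ c ∈ S, c ∉ {x | x ∈ S ∧ ∀ t, ¬ ∃ s ∈ S, x = a t + s} →
      ¬ memApery S (a i) (b + c)) ∧
    (∃ m, memApery S (a i) m ∧
      ∀ x, memApery S (a i) x → semigroupLE S m x → x = m) := by
  have hnot : ∀ c ∈ S, c ∉ aperyOfFamily S a → ¬ memApery S (a i) (b + c) :=
    fun c hc hcE => not_memApery_add_of_not_mem_aperyOfFamily ha hb.1 hstep hc hcE
  refine ⟨hnot, exists_maximal_memApery_of_finite hb ?_⟩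
  refine (hFin.image (b + ·)).subset ?_
  rintro _ ⟨hy, c, hc, rfl⟩
  exact ⟨c, not_not.mp fun hcE => hnot c hc hcE hy, rfl⟩

/-- if `b ∈ Ap(S, a_i)` satisfies `b + c ∉ Ap(S, a_i)` for every
extremal ray `c ∈ E \ {a_i}`, then `b + c ∉ Ap(S, a_i)` for every `c ∈ S \ Ap(S, E)`,
and consequently `Ap(S, a_i)` has a `⪯_S`-maximal element. -/
theorem apery_maximal_of_step {d : ℕ} (S : AddSubmonoid (Fin d → ℕ))
    (a : Fin d → (Fin d → ℕ)) (ha : ∀ i, a i ∈ S)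
    (hE : LinearIndependent ℚ (fun i : Fin d => (fun t => (a i t : ℚ))))
    (hFin : {x | x ∈ S ∧ ∀ t, ¬ ∃ s ∈ S, x = a t + s}.Finite)
    (i : Fin d) (b : Fin d → ℕ) (hb : memApery S (a i) b)
    (hstep : ∀ j, j ≠ i → ¬ memApery S (a i) (b + a j)) :
    (∀ c ∈ S, c ∉ {x | x ∈ S ∧ ∀ t, ¬ ∃ s ∈ S, x = a t + s} →
      ¬ memApery S (a i) (b + c)) ∧
    (∃ m, memApery S (a i) m ∧
      ∀ x, memApery S (a i) x → semigroupLE S m x → x = m) :=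
  apery_maximal_of_step_general S a ha hFin i b hb hstep
end
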